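/- Fix α, β > 0, N ∈ ℕ, and K ∈ ℕ with K ≥ 1. If X_K ~ Beta(αβ/K, β) and, given X_K, the count n_K ~ Binomial(N, X_K), then P(n_K ≥ 1) = 1 − B(αβ/K, β + N)/B(αβ/K, β), and K · P(n_K ≥ 1) converges as K → ∞ to αβ · ∑_{j=0}^{N−1} 1/(β + j). -/

import Mathlib

/-!
By the Gamma-function expression of the Beta function, `B(ε, β + N) / B(ε, β)` is the rational
function `Q(ε) = ∏_{j<N} (β + j) / (ε + β + j)`, with `Q(0) = 1` and `Q'(0) = -∑_{j<N} 1/(β + j)`.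
Hence `K (1 - Q(αβ/K))` is `-αβ` times a difference quotient of `Q` at `0`, which converges to
`-αβ Q'(0)`.
-/

open Filter Topology

namespace ProbabilityTheory

lemma beta_add_one {a b : ℝ} (hb : b ≠ 0) (hab : a + b ≠ 0) :
    beta a (b + 1) = b / (a + b) * beta a b := by
  rw [beta, beta, ← add_assoc, Real.Gamma_add_one hb, Real.Gamma_add_one hab, div_mul_div_comm]
  congr 1
  ring

lemma beta_add_nat {a b : ℝ} (ha : 0 ≤ a) (hb : 0 < b) (N : ℕ) :
    beta a (b + N) = (∏ j ∈ Finset.range N, (b + j) / (a + (b + j))) * beta a b := by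
  induction N with
  | zero => simp
  | succ n ih =>
    have hbn : 0 < b + n := by positivity
    rw [Nat.cast_succ, ← add_assoc, beta_add_one hbn.ne' (by positivity : 0 < a + (b + n)).ne', ih,
      Finset.prod_range_succ]
    ring

lemma integral_rpow_mul_one_sub_rpow_eq_beta {a b : ℝ} (ha : 0 < a) (hb : 0 < b) :
    ∫ x in (0 : ℝ)..1, x ^ (a - 1) * (1 - x) ^ (b - 1) = beta a b := by
  have hcast : ((∫ x in (0 : ℝ)..1, x ^ (a - 1) * (1 - x) ^ (b - 1) : ℝ) : ℂ)
      = Complex.betaIntegral a b := by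
    rw [← intervalIntegral.integral_ofReal, Complex.betaIntegral]
    refine intervalIntegral.integral_congr fun x hx => ?_
    rw [Set.uIcc_of_le zero_le_one] at hx
    push_cast [Complex.ofReal_cpow hx.1, Complex.ofReal_cpow (sub_nonneg.2 hx.2)]
    rfl
  rw [beta_eq_betaIntegralReal a b ha hb, ← hcast, Complex.ofReal_re]

lemma intervalIntegrable_rpow_mul_one_sub_rpow {a b : ℝ} (ha : 0 < a) (hb : 0 < b) :
    IntervalIntegrable (fun x : ℝ => x ^ (a - 1) * (1 - x) ^ (b - 1)) MeasureTheory.volume 0 1 :=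
  intervalIntegral.intervalIntegrable_of_integral_ne_zero <| by
    rw [integral_rpow_mul_one_sub_rpow_eq_beta ha hb]
    exact (beta_pos ha hb).ne'

lemma pow_mul_rpow_sub_one {y b : ℝ} (hy : 0 ≤ y) (hb : 0 < b) (N : ℕ) :
    y ^ N * y ^ (b - 1) = y ^ (b + N - 1) := by
  rcases N.eq_zero_or_pos with rfl | hN
  · simp
  · have hexp : (N : ℝ) + (b - 1) ≠ 0 := by
      have : (1 : ℝ) ≤ N := by exact_mod_cast hN
      linarith
    rw [← Real.rpow_natCast, ← Real.rpow_add' hy hexp]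
    ring_nf

lemma integral_one_sub_one_sub_pow_mul_betaDensity {a b : ℝ} (ha : 0 < a) (hb : 0 < b) (N : ℕ) :
    ∫ x in (0 : ℝ)..1, (1 - (1 - x) ^ N) * (x ^ (a - 1) * (1 - x) ^ (b - 1) / beta a b)
      = 1 - beta a (b + N) / beta a b := by
  have hbN : 0 < b + N := by positivity
  have hintegrand : Set.EqOn
      (fun x : ℝ => (1 - (1 - x) ^ N) * (x ^ (a - 1) * (1 - x) ^ (b - 1) / beta a b))
      (fun x => (x ^ (a - 1) * (1 - x) ^ (b - 1) - x ^ (a - 1) * (1 - x) ^ (b + N - 1)) /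
        beta a b) (Set.uIcc 0 1) := fun x hx => by
    rw [Set.uIcc_of_le zero_le_one] at hx
    simp only [← pow_mul_rpow_sub_one (sub_nonneg.2 hx.2) hb N]
    ring
  rw [intervalIntegral.integral_congr hintegrand, intervalIntegral.integral_div,
    intervalIntegral.integral_sub (intervalIntegrable_rpow_mul_one_sub_rpow ha hb)
      (intervalIntegrable_rpow_mul_one_sub_rpow ha hbN),
    integral_rpow_mul_one_sub_rpow_eq_beta ha hb, integral_rpow_mul_one_sub_rpow_eq_beta ha hbN,
    sub_div, div_self (beta_pos ha hb).ne']

end ProbabilityTheory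

lemma hasDerivAt_prod_div_add_zero {ι : Type*} [DecidableEq ι] {s : Finset ι} {c : ι → ℝ}
    (hc : ∀ j ∈ s, c j ≠ 0) :
    HasDerivAt (fun ε => ∏ j ∈ s, c j / (ε + c j)) (-∑ j ∈ s, 1 / c j) 0 := by
  have hfactor : ∀ j ∈ s, HasDerivAt (fun ε => c j / (ε + c j)) (-(1 / c j)) 0 := fun j hj => by
    have hden : HasDerivAt (fun ε => ε + c j) 1 0 := (hasDerivAt_id 0).add_const (c j)
    refine ((hasDerivAt_const 0 (c j)).fun_div hden (by simpa using hc j hj)).congr_deriv ?_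
    field_simp [hc j hj]
    ring
  refine (HasDerivAt.fun_finsetProd hfactor).congr_deriv ?_
  rw [← Finset.sum_neg_distrib]
  refine Finset.sum_congr rfl fun j _ => ?_
  rw [Finset.prod_eq_one fun i hi => by
    rw [zero_add, div_self (hc i (Finset.mem_of_mem_erase hi))], one_smul]

lemma tendsto_nat_mul_sub_of_hasDerivAt {f : ℝ → ℝ} {f' : ℝ} (c : ℝ) (hf : HasDerivAt f f' 0) :
    Tendsto (fun K : ℕ => (K : ℝ) * (f (c / K) - f 0)) atTop (𝓝 (c * f')) := by
  rcases eq_or_ne c 0 with rfl | hc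
  · simp
  have hstep : Tendsto (fun K : ℕ => c / K) atTop (𝓝[≠] 0) :=
    tendsto_nhdsWithin_of_tendsto_nhds_of_eventually_within _
      (tendsto_const_div_atTop_nhds_zero_nat c)
      (eventually_ne_atTop 0 |>.mono fun K hK => div_ne_zero hc (Nat.cast_ne_zero.2 hK))
  refine ((hasDerivAt_iff_tendsto_slope.1 hf).comp hstep).const_mul c |>.congr' ?_
  filter_upwards [eventually_ne_atTop 0] with K hK
  have hK : (K : ℝ) ≠ 0 := Nat.cast_ne_zero.2 hK
  simp only [Function.comp_apply, slope_def_field, sub_zero]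
  field_simp

open ProbabilityTheory in
/-- In the K-feature beta–binomial model, P(n_K ≥ 1) = 1 − B(αβ/K, β+N)/B(αβ/K, β)
and K·P(n_K ≥ 1) → αβ ∑_{j<N} 1/(β+j) as K → ∞. -/
theorem beta_binomial_seen_limit (α β : ℝ) (hα : 0 < α) (hβ : 0 < β) (N : ℕ)
    (B : ℝ → ℝ → ℝ)
    (hB : ∀ a b : ℝ, B a b = ∫ x in (0:ℝ)..1, x ^ (a - 1) * (1 - x) ^ (b - 1)) :
    (∀ K : ℕ, 1 ≤ K →
      (∫ x in (0:ℝ)..1,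
          (1 - (1 - x) ^ N) * (x ^ (α * β / K - 1) * (1 - x) ^ (β - 1) / B (α * β / K) β))
        = 1 - B (α * β / K) (β + N) / B (α * β / K) β) ∧
    Tendsto (fun K : ℕ => (K : ℝ) * (1 - B (α * β / K) (β + N) / B (α * β / K) β))
      atTop (nhds (α * β * ∑ j ∈ Finset.range N, 1 / (β + j))) := by
  have hB_eq : ∀ {a b}, 0 < a → 0 < b → B a b = beta a b := fun ha hb =>
    (hB _ _).trans (integral_rpow_mul_one_sub_rpow_eq_beta ha hb)
  have hrate : ∀ K : ℕ, 1 ≤ K → 0 < α * β / K := fun K hK => by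
    have : (0 : ℝ) < K := by exact_mod_cast hK
    positivity
  have hbN : 0 < β + N := by positivity
  refine ⟨fun K hK => ?_, ?_⟩
  · rw [hB_eq (hrate K hK) hβ, hB_eq (hrate K hK) hbN]
    exact integral_one_sub_one_sub_pow_mul_betaDensity (hrate K hK) hβ N
  · have hderiv := hasDerivAt_prod_div_add_zero (s := Finset.range N) (c := fun j => β + j)
      fun j _ => by positivity
    have hlim := (tendsto_nat_mul_sub_of_hasDerivAt (α * β) hderiv).neg
    rw [mul_neg, neg_neg] at hlim
    refine hlim.congr' ?_
    have hprod_zero : ∏ j ∈ Finset.range N, (β + j) / (0 + (β + j)) = 1 :=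
      Finset.prod_eq_one fun j _ => by rw [zero_add, div_self (by positivity)]
    filter_upwards [eventually_ge_atTop 1] with K hK
    rw [hB_eq (hrate K hK) hβ, hB_eq (hrate K hK) hbN, beta_add_nat (hrate K hK).le hβ,
      mul_div_cancel_right₀ _ (beta_pos (hrate K hK) hβ).ne', hprod_zero]
    ring
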